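/- arXiv:2305.15850 — 3 statements merged into one kernel-verified Lean document; each statement's English description precedes it below -/
import Mathlib

section
/- Let η₁,…,η_m be i.i.d. with P(η_k = 1/p) = p, P(η_k = 0) = 1−p, c₁,…,c_m ∈ ℝ, y_i, y_j ∈ ℝ (use coefficients c_r^{(i)}, c_r^{(j)} for two samples). For fixed k ∈ [m], with e_i^η = ∑_r η_r c_r^{(i)} − y_i and e_{i,∖k} = ∑_{r≠k} c_r^{(i)} − y_i, the covariance satisfies Cov(e_i^η η_k, e_j^η η_k) = (1/p − 1)·(e_{i,∖k} + (1/p)c_k^{(i)})·(e_{j,∖k} + (1/p)c_k^{(j)}) + (1/p² − 1/p)·∑_{r≠k} c_r^{(i)} c_r^{(j)}. -/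
/-!
Because `η_k ^ 2 = η_k / p`, multiplying by `η_k` replaces `η_k` by `1 / p` inside the error:
`e_i^η η_k = X_i η_k` with `X_i = ∑_{r ≠ k} η_r c_r⁽ⁱ⁾ + c_k⁽ⁱ⁾ / p - y_i`, and `(X_i, X_j)` is
independent of `η_k`. Hence the covariance equals `E[X_i X_j] E[η_k²] - E[X_i] E[X_j] E[η_k]²`
with `E[η_k] = 1` and `E[η_k²] = 1 / p`, while independence of the remaining masks gives
`Cov(X_i, X_j) = Var(η) ∑_{r ≠ k} c_r⁽ⁱ⁾ c_r⁽ʲ⁾ = (1 / p - 1) ∑_{r ≠ k} c_r⁽ⁱ⁾ c_r⁽ʲ⁾`.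
-/

open MeasureTheory ProbabilityTheory Finset

lemma ProbabilityTheory.iIndepFun.indepFun_comp_of_notMem {Ω ι β γ : Type*} [MeasurableSpace Ω]
    {μ : Measure Ω} [MeasurableSpace β] [MeasurableSpace γ] {f : ι → Ω → β}
    (h : iIndepFun f μ) (hf : ∀ i, Measurable (f i)) {s : Finset ι} {k : ι} (hk : k ∉ s)
    {φ : (s → β) → γ} (hφ : Measurable φ) :
    IndepFun (fun ω => φ fun i => f i ω) (f k) μ :=
  (h.indepFun_finset s {k} (disjoint_singleton_right.2 hk) hf).comp hφ
    (measurable_pi_apply (⟨k, mem_singleton_self k⟩ : ({k} : Finset ι)))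

section Moments

variable {Ω : Type*} [MeasurableSpace Ω] {μ : Measure Ω}

lemma integral_mul_mul_sub_of_indepFun {X Y Z : Ω → ℝ}
    (h : IndepFun (fun ω => (X ω, Y ω)) Z μ) (hX : AEStronglyMeasurable X μ)
    (hY : AEStronglyMeasurable Y μ) (hZ : AEStronglyMeasurable Z μ) :
    ∫ ω, X ω * Z ω * (Y ω * Z ω) ∂μ - (∫ ω, X ω * Z ω ∂μ) * ∫ ω, Y ω * Z ω ∂μ
      = (∫ ω, X ω * Y ω ∂μ) * ∫ ω, Z ω ^ 2 ∂μ
        - (∫ ω, X ω ∂μ) * (∫ ω, Y ω ∂μ) * (∫ ω, Z ω ∂μ) ^ 2 := by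
  have hXZ : IndepFun X Z μ := h.comp measurable_fst measurable_id
  have hYZ : IndepFun Y Z μ := h.comp measurable_snd measurable_id
  have hXYZ : IndepFun (fun ω => X ω * Y ω) (fun ω => Z ω ^ 2) μ :=
    h.comp (measurable_fst.mul measurable_snd) (measurable_id.pow_const 2)
  have hsplit : ∀ ω, X ω * Z ω * (Y ω * Z ω) = X ω * Y ω * Z ω ^ 2 := fun ω => by ring
  rw [integral_congr_ae (ae_of_all _ hsplit),
    hXYZ.integral_fun_mul_eq_mul_integral (hX.mul hY) (hZ.pow 2),
    hXZ.integral_fun_mul_eq_mul_integral hX hZ, hYZ.integral_fun_mul_eq_mul_integral hY hZ]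
  ring

lemma covariance_sum_mul_sum_mul {ι : Type*} [IsFiniteMeasure μ] {f : ι → Ω → ℝ}
    {s : Finset ι} (hf : ∀ i ∈ s, MemLp (f i) 2 μ)
    (hindep : Set.Pairwise s fun i j => IndepFun (f i) (f j) μ) (a b : ι → ℝ) :
    cov[fun ω => ∑ i ∈ s, f i ω * a i, fun ω => ∑ i ∈ s, f i ω * b i; μ]
      = ∑ i ∈ s, a i * b i * Var[f i; μ] := by
  rw [covariance_fun_sum_fun_sum' (fun i hi => (hf i hi).mul_const (a i))
    (fun i hi => (hf i hi).mul_const (b i))]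
  refine sum_congr rfl fun i hi => ?_
  rw [sum_eq_single_of_mem i hi fun j hj hji => ?_]
  · rw [covariance_mul_const_left, covariance_mul_const_right,
      covariance_self (hf i hi).aemeasurable]
    ring
  · rw [covariance_mul_const_left, covariance_mul_const_right,
      (hindep hi hj hji.symm).covariance_eq_zero (hf i hi) (hf j hj)]
    ring

end Moments

section Dropout

lemma dropout_sq {Ω : Type*} {p : ℝ} {η : Ω → ℝ} (hval : ∀ ω, η ω = 1 / p ∨ η ω = 0) (ω : Ω) :
    η ω ^ 2 = η ω / p := by
  rcases hval ω with h | h <;> rw [h] <;> ring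

lemma dropout_error_mul {Ω ι : Type*} [Fintype ι] [DecidableEq ι] {p : ℝ} {η : ι → Ω → ℝ}
    {k : ι} (hk : ∀ ω, η k ω = 1 / p ∨ η k ω = 0) (c : ι → ℝ) (y : ℝ) (ω : Ω) :
    ((∑ r, η r ω * c r) - y) * η k ω
      = (∑ r ∈ univ.erase k, η r ω * c r + (1 / p * c k - y)) * η k ω := by
  rw [← sum_erase_add _ _ (mem_univ k)]
  linear_combination c k * dropout_sq hk ω

variable {Ω : Type*} [MeasurableSpace Ω] {μ : Measure Ω} {p : ℝ} {η : Ω → ℝ}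

lemma memLp_two_of_dropout [IsFiniteMeasure μ] (hη : Measurable η)
    (hval : ∀ ω, η ω = 1 / p ∨ η ω = 0) : MemLp η 2 μ :=
  MemLp.of_bound hη.aestronglyMeasurable |1 / p| <| ae_of_all _ fun ω => by
    rcases hval ω with h | h <;> simp [h]

lemma integral_dropout (hp : 0 < p) (hη : Measurable η) (hval : ∀ ω, η ω = 1 / p ∨ η ω = 0)
    (hdist : μ {ω | η ω = 1 / p} = ENNReal.ofReal p) : ∫ ω, η ω ∂μ = 1 := by
  have hS : MeasurableSet {ω | η ω = 1 / p} := hη (measurableSet_singleton _)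
  have hind : ∀ ω, η ω = {ω | η ω = 1 / p}.indicator (fun _ => 1 / p) ω := fun ω => by
    by_cases h : η ω = 1 / p
    · simp only [Set.indicator_of_mem (show ω ∈ {ω | η ω = 1 / p} from h), h]
    · rw [Set.indicator_of_notMem (show ω ∉ {ω | η ω = 1 / p} from h), (hval ω).resolve_left h]
  rw [integral_congr_ae (ae_of_all _ hind), integral_indicator_const _ hS, measureReal_def, hdist,
    ENNReal.toReal_ofReal hp.le, smul_eq_mul, mul_one_div_cancel hp.ne']

lemma integral_dropout_sq (hp : 0 < p) (hη : Measurable η) (hval : ∀ ω, η ω = 1 / p ∨ η ω = 0)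
    (hdist : μ {ω | η ω = 1 / p} = ENNReal.ofReal p) : ∫ ω, η ω ^ 2 ∂μ = 1 / p := by
  rw [integral_congr_ae (ae_of_all _ (dropout_sq hval)), integral_div,
    integral_dropout hp hη hval hdist]

lemma variance_dropout [IsProbabilityMeasure μ] (hp : 0 < p) (hη : Measurable η)
    (hval : ∀ ω, η ω = 1 / p ∨ η ω = 0) (hdist : μ {ω | η ω = 1 / p} = ENNReal.ofReal p) :
    Var[η; μ] = 1 / p - 1 := by
  rw [variance_eq_sub (memLp_two_of_dropout hη hval)]
  simp only [Pi.pow_apply]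
  rw [integral_dropout_sq hp hη hval hdist, integral_dropout hp hη hval hdist, one_pow]

end Dropout

section DropoutFamily

variable {Ω ι : Type*} [MeasurableSpace Ω] {μ : Measure Ω} [IsProbabilityMeasure μ] {p : ℝ}
  {η : ι → Ω → ℝ}

lemma memLp_sum_dropout_mul_add (hmeas : ∀ r, Measurable (η r))
    (hval : ∀ r ω, η r ω = 1 / p ∨ η r ω = 0) (s : Finset ι) (c : ι → ℝ) (a : ℝ) :
    MemLp (fun ω => ∑ r ∈ s, η r ω * c r + a) 2 μ :=
  (memLp_finsetSum s fun r _ => (memLp_two_of_dropout (hmeas r) (hval r)).mul_const (c r)).add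
    (memLp_const a)

lemma integral_sum_dropout_mul_add (hp : 0 < p) (hmeas : ∀ r, Measurable (η r))
    (hval : ∀ r ω, η r ω = 1 / p ∨ η r ω = 0)
    (hdist : ∀ r, μ {ω | η r ω = 1 / p} = ENNReal.ofReal p) (s : Finset ι) (c : ι → ℝ) (a : ℝ) :
    ∫ ω, ∑ r ∈ s, η r ω * c r + a ∂μ = ∑ r ∈ s, c r + a := by
  have hint : ∀ r ∈ s, Integrable (fun ω => η r ω * c r) μ := fun r _ =>
    ((memLp_two_of_dropout (hmeas r) (hval r)).integrable one_le_two).mul_const _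
  rw [integral_add (integrable_finsetSum s hint) (integrable_const a), integral_finsetSum s hint,
    integral_const, probReal_univ, one_smul]
  simp only [integral_mul_const, integral_dropout hp (hmeas _) (hval _) (hdist _), one_mul]

lemma covariance_sum_dropout_mul_add (hp : 0 < p) (hmeas : ∀ r, Measurable (η r))
    (hindep : iIndepFun η μ) (hval : ∀ r ω, η r ω = 1 / p ∨ η r ω = 0)
    (hdist : ∀ r, μ {ω | η r ω = 1 / p} = ENNReal.ofReal p) (s : Finset ι) (c d : ι → ℝ)
    (a b : ℝ) :
    cov[fun ω => ∑ r ∈ s, η r ω * c r + a, fun ω => ∑ r ∈ s, η r ω * d r + b; μ]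
      = (1 / p - 1) * ∑ r ∈ s, c r * d r := by
  have hL2 : ∀ r, MemLp (η r) 2 μ := fun r => memLp_two_of_dropout (hmeas r) (hval r)
  have hsumL2 : ∀ e : ι → ℝ, MemLp (fun ω => ∑ r ∈ s, η r ω * e r) 2 μ := fun e =>
    memLp_finsetSum s fun r _ => (hL2 r).mul_const (e r)
  rw [covariance_add_const_left ((hsumL2 c).integrable one_le_two),
    covariance_add_const_right ((hsumL2 d).integrable one_le_two),
    covariance_sum_mul_sum_mul (fun r _ => hL2 r) (fun i _ j _ hij => hindep.indepFun hij),
    mul_sum]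
  simp only [variance_dropout hp (hmeas _) (hval _) (hdist _)]
  exact sum_congr rfl fun r _ => by ring

end DropoutFamily

theorem stmt_3_general {Ω : Type*} [MeasurableSpace Ω] (μ : Measure Ω) [IsProbabilityMeasure μ]
    (m : ℕ) (p : ℝ) (hp : 0 < p)
    (η : Fin m → Ω → ℝ) (hmeas : ∀ k, Measurable (η k))
    (hindep : iIndepFun η μ)
    (hval : ∀ k ω, η k ω = 1 / p ∨ η k ω = 0)
    (hdist : ∀ k, μ {ω | η k ω = 1 / p} = ENNReal.ofReal p)
    (ci cj : Fin m → ℝ) (yi yj : ℝ) (k : Fin m) :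
    (∫ ω, (((∑ r, η r ω * ci r) - yi) * η k ω) * (((∑ r, η r ω * cj r) - yj) * η k ω) ∂μ)
      - (∫ ω, ((∑ r, η r ω * ci r) - yi) * η k ω ∂μ)
        * (∫ ω, ((∑ r, η r ω * cj r) - yj) * η k ω ∂μ)
    = (1 / p - 1) * (((∑ r ∈ univ.erase k, ci r) - yi) + (1 / p) * ci k)
        * (((∑ r ∈ univ.erase k, cj r) - yj) + (1 / p) * cj k)
      + (1 / p ^ 2 - 1 / p) * ∑ r ∈ univ.erase k, ci r * cj r := by
  set X : (Fin m → ℝ) → ℝ → Ω → ℝ :=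
    fun c y ω => ∑ r ∈ univ.erase k, η r ω * c r + (1 / p * c k - y)
  simp_rw [dropout_error_mul (hval k)]
  have hXk : IndepFun (fun ω => (X ci yi ω, X cj yj ω)) (η k) μ := by
    convert hindep.indepFun_comp_of_notMem hmeas (notMem_erase k univ)
      (φ := fun x => (∑ r, x r * ci r + (1 / p * ci k - yi), ∑ r, x r * cj r + (1 / p * cj k - yj)))
      (by fun_prop) using 4 <;>
    exact (sum_coe_sort _ _).symm
  have hXm : ∀ c y, AEStronglyMeasurable (X c y) μ := fun c y =>
    ((measurable_sum _ fun r _ => (hmeas r).mul_const _).add_const _).aestronglyMeasurable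
  have hE : ∀ c y, ∫ ω, X c y ω ∂μ = ∑ r ∈ univ.erase k, c r + (1 / p * c k - y) := fun c y =>
    integral_sum_dropout_mul_add hp hmeas hval hdist _ c _
  have hXX : ∫ ω, X ci yi ω * X cj yj ω ∂μ
      = (1 / p - 1) * ∑ r ∈ univ.erase k, ci r * cj r
        + (∫ ω, X ci yi ω ∂μ) * ∫ ω, X cj yj ω ∂μ := by
    rw [← covariance_sum_dropout_mul_add hp hmeas hindep hval hdist _ ci cj (1 / p * ci k - yi)
      (1 / p * cj k - yj), covariance_eq_sub (memLp_sum_dropout_mul_add hmeas hval _ ci _)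
        (memLp_sum_dropout_mul_add hmeas hval _ cj _)]
    exact (sub_add_cancel _ _).symm
  rw [integral_mul_mul_sub_of_indepFun hXk (hXm ci yi) (hXm cj yj) (hmeas k).aestronglyMeasurable,
    hXX, hE, hE, integral_dropout_sq hp (hmeas k) (hval k) (hdist k),
    integral_dropout hp (hmeas k) (hval k) (hdist k)]
  ring

/-- Diagonal covariance of the dropout noise: for a fixed neuron `k`,
`Cov(e_i^η η_k, e_j^η η_k)
  = (1/p − 1)(e_{i,\k} + c_k⁽ⁱ⁾/p)(e_{j,\k} + c_k⁽ʲ⁾/p)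
    + (1/p² − 1/p) ∑_{r ≠ k} c_r⁽ⁱ⁾ c_r⁽ʲ⁾`. -/
theorem stmt_3 {Ω : Type*} [MeasurableSpace Ω] (μ : Measure Ω) [IsProbabilityMeasure μ]
    (m : ℕ) (p : ℝ) (hp : 0 < p) (hp1 : p ≤ 1)
    (η : Fin m → Ω → ℝ) (hmeas : ∀ k, Measurable (η k))
    (hindep : iIndepFun η μ)
    (hval : ∀ k ω, η k ω = 1 / p ∨ η k ω = 0)
    (hdist : ∀ k, μ {ω | η k ω = 1 / p} = ENNReal.ofReal p)
    (ci cj : Fin m → ℝ) (yi yj : ℝ) (k : Fin m) :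
    (∫ ω, (((∑ r, η r ω * ci r) - yi) * η k ω) * (((∑ r, η r ω * cj r) - yj) * η k ω) ∂μ)
      - (∫ ω, ((∑ r, η r ω * ci r) - yi) * η k ω ∂μ)
        * (∫ ω, ((∑ r, η r ω * cj r) - yj) * η k ω ∂μ)
    = (1 / p - 1) * (((∑ r ∈ univ.erase k, ci r) - yi) + (1 / p) * ci k)
        * (((∑ r ∈ univ.erase k, cj r) - yj) + (1 / p) * cj k)
      + (1 / p ^ 2 - 1 / p) * ∑ r ∈ univ.erase k, ci r * cj r :=
  stmt_3_general μ m p hp η hmeas hindep hval hdist ci cj yi yj k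
end

section
/- Let f_θ(x) = ∑_{r=1}^m a_r σ(w_rᵀx) be a two-layer network, η the coordinatewise dropout mask with keep probability p, and R^drop(θ;η) = (1/2n)∑_{i=1}^n(∑_r η_r a_r σ(w_rᵀx_i) − y_i)². Define the modified loss L_S(θ) = (1/2n)∑_i(f_θ(x_i) − y_i)² + (1−p)/(2np)·∑_i ∑_r a_r² σ(w_rᵀx_i)². Then E_η[∇_θ R^drop(θ;η)] = ∇_θ L_S(θ). -/
/-!
The dropout loss `R^drop(θ; η)` is a polynomial of degree two in the mask `η` whose coefficients
are differentiable in `θ`, so the expectation over `η` commutes with the gradient in `θ`. It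
remains to compute `E_η R^drop(θ; η)`: the dropout coordinates have `E η_r = 1` and
`E η_r η_s = 1 + (1/p - 1) δ_rs`, so `E (∑_r η_r a_r - b)² = (∑_r a_r - b)² + (1/p - 1) ∑_r a_r²`,
and summing over the samples turns the expected dropout loss into `L_S(θ)`.
-/

open MeasureTheory ProbabilityTheory Finset
open scoped RealInnerProductSpace

section Dropout

variable {ι κ Ω : Type*}

/-- The coordinate `none` is a bias neuron: its mask value is `1` and its feature is `-b`. -/
theorem sum_mul_sub_eq_sum_option [Fintype ι] (v a : ι → ℝ) (b : ℝ) :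
    ∑ r, v r * a r - b = ∑ o : Option ι, o.elim 1 v * o.elim (-b) a := by
  simp only [Fintype.sum_option, Option.elim_none, Option.elim_some]
  ring

theorem sq_sum_mul_sub_eq_sum_option [Fintype ι] (v a : ι → ℝ) (b : ℝ) :
    (∑ r, v r * a r - b) ^ 2 = ∑ o : Option ι, ∑ o' : Option ι,
      (o.elim 1 v * o'.elim 1 v) * (o.elim (-b) a * o'.elim (-b) a) := by
  rw [sum_mul_sub_eq_sum_option, sq, sum_mul_sum]
  exact sum_congr rfl fun _ _ => sum_congr rfl fun _ _ => by ring

theorem mul_sum_sq_sum_mul_sub_eq [Fintype ι] [Fintype κ] (c : ℝ) (v : ι → ℝ) (a : κ → ι → ℝ)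
    (y : κ → ℝ) :
    c * ∑ i, (∑ r, v r * a i r - y i) ^ 2 =
      ∑ k : Option ι × Option ι, (k.1.elim 1 v * k.2.elim 1 v) *
        (c * ∑ i, k.1.elim (-y i) (a i) * k.2.elim (-y i) (a i)) := by
  simp_rw [sq_sum_mul_sub_eq_sum_option, Fintype.sum_prod_type, mul_sum]
  rw [sum_comm]
  refine sum_congr rfl fun _ _ => ?_
  rw [sum_comm]
  exact sum_congr rfl fun _ _ => sum_congr rfl fun _ _ => by ring

theorem differentiable_optionElim {E : Type*} [NormedAddCommGroup E] [NormedSpace ℝ E]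
    {f : ι → E → ℝ} (hf : ∀ r, Differentiable ℝ (f r)) (b : ℝ) (o : Option ι) :
    Differentiable ℝ (fun θ => o.elim b (f · θ)) := by
  cases o <;> simp [hf]

theorem differentiable_neuron {m : ℕ} {F : Type*} [NormedAddCommGroup F] [InnerProductSpace ℝ F]
    {σ : ℝ → ℝ} (hσ : Differentiable ℝ σ) (x : F) (r : Fin m) :
    Differentiable ℝ (fun θ : (Fin m → ℝ) × (Fin m → F) => θ.1 r * σ ⟪θ.2 r, x⟫) := by
  have ha : Differentiable ℝ (fun θ : (Fin m → ℝ) × (Fin m → F) => θ.1 r) := by fun_prop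
  have hw : Differentiable ℝ (fun θ : (Fin m → ℝ) × (Fin m → F) => θ.2 r) := by fun_prop
  exact ha.mul (hσ.comp (hw.inner ℝ (differentiable_const x)))

theorem eq_indicator_of_forall_eq_or_eq_zero {ξ : Ω → ℝ} {c : ℝ}
    (hval : ∀ ω, ξ ω = c ∨ ξ ω = 0) : ξ = {ω | ξ ω = c}.indicator fun _ => c := by
  funext ω
  rcases hval ω with h | h <;> by_cases hc : c = 0 <;> simp [Set.indicator_apply, h, hc]

variable [MeasurableSpace Ω] {μ : Measure Ω}

theorem integral_fderiv_sum_mul [Fintype ι] {E : Type*} [NormedAddCommGroup E]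
    [NormedSpace ℝ E] {c : ι → Ω → ℝ} {g : ι → E → ℝ} {θ : E} (hc : ∀ k, Integrable (c k) μ)
    (hg : ∀ k, DifferentiableAt ℝ (g k) θ) :
    ∫ ω, fderiv ℝ (fun θ' => ∑ k, c k ω * g k θ') θ ∂μ =
      fderiv ℝ (fun θ' => ∫ ω, ∑ k, c k ω * g k θ' ∂μ) θ := by
  have hderiv (a : ι → ℝ) :
      fderiv ℝ (fun θ' => ∑ k, a k * g k θ') θ = ∑ k, a k • fderiv ℝ (g k) θ :=
    (HasFDerivAt.fun_sum fun k _ => (hg k).hasFDerivAt.const_mul (a k)).fderiv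
  have hmean : (fun θ' => ∫ ω, ∑ k, c k ω * g k θ' ∂μ) =
      fun θ' => ∑ k, (∫ ω, c k ω ∂μ) * g k θ' := by
    funext θ'
    rw [integral_finsetSum _ fun k _ => (hc k).mul_const _]
    simp_rw [integral_mul_const]
  simp_rw [hmean, hderiv]
  rw [integral_finsetSum _ fun k _ => (hc k).smul_const _]
  simp_rw [integral_smul_const]

section Moments

variable [IsFiniteMeasure μ] {η : ι → Ω → ℝ}

theorem integrable_elim_mul_elim (h1 : ∀ r, Integrable (η r) μ)
    (h2 : ∀ r s, Integrable (fun ω => η r ω * η s ω) μ) (o o' : Option ι) :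
    Integrable (fun ω => o.elim 1 (η · ω) * o'.elim 1 (η · ω)) μ := by
  cases o <;> cases o' <;> simp [h1, h2]

theorem integrable_sq_sum_mul_sub [Fintype ι] (h1 : ∀ r, Integrable (η r) μ)
    (h2 : ∀ r s, Integrable (fun ω => η r ω * η s ω) μ) (a : ι → ℝ) (b : ℝ) :
    Integrable (fun ω => (∑ r, η r ω * a r - b) ^ 2) μ := by
  simp_rw [sq_sum_mul_sub_eq_sum_option]
  exact integrable_finsetSum _ fun o _ => integrable_finsetSum _ fun o' _ =>
    (integrable_elim_mul_elim h1 h2 o o').mul_const _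

theorem integral_sq_sum_mul_sub [Fintype ι] [DecidableEq ι] [IsProbabilityMeasure μ] {M : ℝ}
    (h1 : ∀ r, Integrable (η r) μ) (h2 : ∀ r s, Integrable (fun ω => η r ω * η s ω) μ)
    (hmean : ∀ r, ∫ ω, η r ω ∂μ = 1)
    (hmom : ∀ r s, ∫ ω, η r ω * η s ω ∂μ = if r = s then M else 1) (a : ι → ℝ) (b : ℝ) :
    ∫ ω, (∑ r, η r ω * a r - b) ^ 2 ∂μ = (∑ r, a r - b) ^ 2 + (M - 1) * ∑ r, a r ^ 2 := by
  simp_rw [sq_sum_mul_sub_eq_sum_option]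
  rw [integral_finsetSum _ fun o _ => integrable_finsetSum _ fun o' _ =>
    (integrable_elim_mul_elim h1 h2 o o').mul_const _]
  simp_rw [integral_finsetSum _ fun o' _ => (integrable_elim_mul_elim h1 h2 _ o').mul_const _,
    integral_mul_const]
  have hdiag (r s : ι) : (if r = s then M * (a r * a s) else a r * a s) =
      a r * a s + if r = s then (M - 1) * a r ^ 2 else 0 := by
    split_ifs with h
    · subst h; ring
    · ring
  simp only [Fintype.sum_option, Option.elim_none, Option.elim_some, mul_one, one_mul, mul_neg,
    neg_mul, neg_add_rev, neg_neg, integral_const, probReal_univ, smul_eq_mul, hmean, hmom,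
    ite_mul, hdiag, sum_add_distrib, sum_neg_distrib, ← sum_mul, ← mul_sum, sum_ite_eq, mem_univ,
    if_true]
  ring

theorem integral_mul_sum_sq_sum_mul_sub [Fintype ι] [DecidableEq ι] [Fintype κ]
    [IsProbabilityMeasure μ] {M : ℝ} (h1 : ∀ r, Integrable (η r) μ)
    (h2 : ∀ r s, Integrable (fun ω => η r ω * η s ω) μ) (hmean : ∀ r, ∫ ω, η r ω ∂μ = 1)
    (hmom : ∀ r s, ∫ ω, η r ω * η s ω ∂μ = if r = s then M else 1)
    (c : ℝ) (a : κ → ι → ℝ) (y : κ → ℝ) :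
    ∫ ω, c * ∑ i, (∑ r, η r ω * a i r - y i) ^ 2 ∂μ =
      c * ∑ i, (∑ r, a i r - y i) ^ 2 + c * (M - 1) * ∑ i, ∑ r, a i r ^ 2 := by
  rw [integral_const_mul, integral_finsetSum _ fun i _ => integrable_sq_sum_mul_sub h1 h2 _ _]
  simp_rw [integral_sq_sum_mul_sub h1 h2 hmean hmom]
  rw [sum_add_distrib, ← mul_sum, mul_add, mul_assoc]

theorem integrable_of_forall_eq_or_eq_zero {ξ : Ω → ℝ} {c : ℝ}
    (hξ : Measurable ξ) (hval : ∀ ω, ξ ω = c ∨ ξ ω = 0) : Integrable ξ μ := by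
  rw [eq_indicator_of_forall_eq_or_eq_zero hval]
  exact (integrable_const c).indicator (hξ (measurableSet_singleton c))

theorem integrable_mul_of_iIndepFun {c : ℝ} (hmeas : ∀ r, Measurable (η r))
    (hindep : iIndepFun η μ) (hval : ∀ r ω, η r ω = c ∨ η r ω = 0) (r s : ι) :
    Integrable (fun ω => η r ω * η s ω) μ := by
  have hint r := integrable_of_forall_eq_or_eq_zero (μ := μ) (hmeas r) (hval r)
  by_cases h : r = s
  · subst h
    have hsq ω : η r ω * η r ω = c * η r ω := by rcases hval r ω with h | h <;> simp [h]
    simp_rw [hsq]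
    exact (hint r).const_mul c
  · exact (hindep.indepFun h).integrable_mul (hint r) (hint s)

end Moments

theorem integral_eq_one_of_dropout {ξ : Ω → ℝ} {p : ℝ} (hp : 0 < p) (hξ : Measurable ξ)
    (hval : ∀ ω, ξ ω = 1 / p ∨ ξ ω = 0) (hdist : μ {ω | ξ ω = 1 / p} = ENNReal.ofReal p) :
    ∫ ω, ξ ω ∂μ = 1 := by
  rw [eq_indicator_of_forall_eq_or_eq_zero hval,
    integral_indicator_const (s := {ω | ξ ω = 1 / p}) _ (hξ (measurableSet_singleton _)),
    measureReal_def, hdist, ENNReal.toReal_ofReal hp.le, smul_eq_mul]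
  field_simp

theorem integral_mul_of_dropout [IsProbabilityMeasure μ] [DecidableEq ι] {η : ι → Ω → ℝ}
    {p : ℝ} (hp : 0 < p) (hmeas : ∀ r, Measurable (η r)) (hindep : iIndepFun η μ)
    (hval : ∀ r ω, η r ω = 1 / p ∨ η r ω = 0)
    (hdist : ∀ r, μ {ω | η r ω = 1 / p} = ENNReal.ofReal p) (r s : ι) :
    ∫ ω, η r ω * η s ω ∂μ = if r = s then 1 / p else 1 := by
  have hmean r := integral_eq_one_of_dropout (μ := μ) hp (hmeas r) (hval r) (hdist r)
  split_ifs with h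
  · subst h
    have hsq ω : η r ω * η r ω = 1 / p * η r ω := by rcases hval r ω with h | h <;> simp [h]
    simp_rw [hsq, integral_const_mul, hmean, mul_one]
  · rw [(hindep.indepFun h).integral_fun_mul_eq_mul_integral (hmeas r).aestronglyMeasurable
      (hmeas s).aestronglyMeasurable, hmean, hmean, mul_one]

end Dropout

theorem stmt_6_general {Ω : Type*} [MeasurableSpace Ω] (μ : Measure Ω) [IsProbabilityMeasure μ]
    (m n d : ℕ) (p : ℝ) (hp : 0 < p)
    (η : Fin m → Ω → ℝ) (hmeas : ∀ k, Measurable (η k))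
    (hindep : iIndepFun η μ)
    (hval : ∀ k ω, η k ω = 1 / p ∨ η k ω = 0)
    (hdist : ∀ k, μ {ω | η k ω = 1 / p} = ENNReal.ofReal p)
    (σ : ℝ → ℝ) (hσ : Differentiable ℝ σ)
    (x : Fin n → EuclideanSpace ℝ (Fin d)) (y : Fin n → ℝ)
    (θ : (Fin m → ℝ) × (Fin m → EuclideanSpace ℝ (Fin d))) :
    let Rdrop : ((Fin m → ℝ) × (Fin m → EuclideanSpace ℝ (Fin d))) → (Fin m → ℝ) → ℝ :=
      fun θ' v => (1 / (2 * (n : ℝ))) * ∑ i, ((∑ r, v r * θ'.1 r * σ ⟪θ'.2 r, x i⟫) - y i) ^ 2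
    let LS : ((Fin m → ℝ) × (Fin m → EuclideanSpace ℝ (Fin d))) → ℝ :=
      fun θ' => (1 / (2 * (n : ℝ))) * ∑ i, ((∑ r, θ'.1 r * σ ⟪θ'.2 r, x i⟫) - y i) ^ 2
        + ((1 - p) / (2 * (n : ℝ) * p)) * ∑ i, ∑ r, (θ'.1 r) ^ 2 * σ ⟪θ'.2 r, x i⟫ ^ 2
    (∫ ω, fderiv ℝ (fun θ' => Rdrop θ' (fun k => η k ω)) θ ∂μ) = fderiv ℝ LS θ := by
  intro Rdrop LS
  have h1 k := integrable_of_forall_eq_or_eq_zero (μ := μ) (hmeas k) (hval k)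
  have h2 := integrable_mul_of_iIndepFun hmeas hindep hval
  have hmean k := integral_eq_one_of_dropout (μ := μ) hp (hmeas k) (hval k) (hdist k)
  have hmom := integral_mul_of_dropout hp hmeas hindep hval hdist
  set u : Fin n → Fin m → (Fin m → ℝ) × (Fin m → EuclideanSpace ℝ (Fin d)) → ℝ :=
    fun i r θ' => θ'.1 r * σ ⟪θ'.2 r, x i⟫ with hu
  have hu_diff i r : Differentiable ℝ (u i r) := differentiable_neuron hσ (x i) r
  have hRdrop θ' (v : Fin m → ℝ) :
      Rdrop θ' v = ∑ k : Option (Fin m) × Option (Fin m), (k.1.elim 1 v * k.2.elim 1 v) *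
        (1 / (2 * (n : ℝ)) * ∑ i, k.1.elim (-y i) (u i · θ') * k.2.elim (-y i) (u i · θ')) := by
    rw [← mul_sum_sq_sum_mul_sub_eq]
    simp only [Rdrop, hu, mul_assoc]
  have hLS θ' : ∫ ω, Rdrop θ' (η · ω) ∂μ = LS θ' := by
    simp only [Rdrop, LS, mul_assoc]
    rw [integral_mul_sum_sq_sum_mul_sub h1 h2 hmean hmom]
    simp_rw [mul_pow]
    congr 2
    field_simp
  simp_rw [hRdrop]
  rw [integral_fderiv_sum_mul (fun k => integrable_elim_mul_elim h1 h2 _ _) fun k =>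
    ((Differentiable.fun_sum fun i _ => (differentiable_optionElim (hu_diff i) _ k.1).mul
      (differentiable_optionElim (hu_diff i) _ k.2)).const_mul _).differentiableAt]
  simp_rw [← hRdrop, hLS]

/-- The expectation over the dropout mask of the dropout-loss gradient equals
the gradient of the modified loss
`L_S(θ) = (1/2n)∑_i (f_θ(x_i) − y_i)² + (1−p)/(2np)·∑_i ∑_r a_r² σ(w_rᵀx_i)²`. -/
theorem stmt_6 {Ω : Type*} [MeasurableSpace Ω] (μ : Measure Ω) [IsProbabilityMeasure μ]
    (m n d : ℕ) (p : ℝ) (hp : 0 < p) (hp1 : p ≤ 1)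
    (η : Fin m → Ω → ℝ) (hmeas : ∀ k, Measurable (η k))
    (hindep : iIndepFun η μ)
    (hval : ∀ k ω, η k ω = 1 / p ∨ η k ω = 0)
    (hdist : ∀ k, μ {ω | η k ω = 1 / p} = ENNReal.ofReal p)
    (σ : ℝ → ℝ) (hσ : Differentiable ℝ σ)
    (x : Fin n → EuclideanSpace ℝ (Fin d)) (y : Fin n → ℝ)
    (θ : (Fin m → ℝ) × (Fin m → EuclideanSpace ℝ (Fin d))) :
    let Rdrop : ((Fin m → ℝ) × (Fin m → EuclideanSpace ℝ (Fin d))) → (Fin m → ℝ) → ℝ :=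
      fun θ' v => (1 / (2 * (n : ℝ))) * ∑ i, ((∑ r, v r * θ'.1 r * σ ⟪θ'.2 r, x i⟫) - y i) ^ 2
    let LS : ((Fin m → ℝ) × (Fin m → EuclideanSpace ℝ (Fin d))) → ℝ :=
      fun θ' => (1 / (2 * (n : ℝ))) * ∑ i, ((∑ r, θ'.1 r * σ ⟪θ'.2 r, x i⟫) - y i) ^ 2
        + ((1 - p) / (2 * (n : ℝ) * p)) * ∑ i, ∑ r, (θ'.1 r) ^ 2 * σ ⟪θ'.2 r, x i⟫ ^ 2
    (∫ ω, fderiv ℝ (fun θ' => Rdrop θ' (fun k => η k ω)) θ ∂μ) = fderiv ℝ LS θ :=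
  stmt_6_general μ m n d p hp η hmeas hindep hval hdist σ hσ x y θ
end

section
/- Under the same hypotheses (σ smooth and 1-Lipschitz with σ(0)=0, bounded σ', σ'', and bounded data), there exists a constant C > 0 such that ‖∇²_θ L_S(θ) · ∇_θ L_S(θ)‖₂ ≤ C(1 + ‖θ‖₂⁶) for all θ, where L_S is the modified dropout loss of a two-layer network. -/
open Finset
open scoped RealInnerProductSpace

/-!
Both the gradient and the Hessian of `L_S` grow at most cubically in `‖θ‖`, with constants
depending only on `p` and `M`; the claim follows from `‖∇²L_S · ∇L_S‖ ≤ ‖∇²L_S‖ ‖∇L_S‖`.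
The cubic bounds are pushed through sums and products by recording, for each function, bounds on
its value and first two derivatives in terms of `‖x‖` (`HasC2Bounds`). Independence of the width
comes from the separable structure `θ ↦ ∑ r, h (θ r)`: its Hessian is block diagonal, so its norm
is controlled by the largest block, and its gradient is controlled by Cauchy–Schwarz.
-/

section C2Bounds

variable {H : Type*} [NormedAddCommGroup H] [NormedSpace ℝ H]

def HasC2Bounds (f : H → ℝ) (v b c : ℝ → ℝ) : Prop :=
  ∃ (f' : H → H →L[ℝ] ℝ) (f'' : H → H →L[ℝ] H →L[ℝ] ℝ),
    (∀ x, HasFDerivAt f (f' x) x) ∧ (∀ x, HasFDerivAt f' (f'' x) x) ∧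
    ∀ x, |f x| ≤ v ‖x‖ ∧ ‖f' x‖ ≤ b ‖x‖ ∧ ‖f'' x‖ ≤ c ‖x‖

namespace HasC2Bounds

variable {f g : H → ℝ} {v b c v₁ b₁ c₁ v₂ b₂ c₂ : ℝ → ℝ}

theorem mono (hf : HasC2Bounds f v₁ b₁ c₁) (hv : ∀ t, 0 ≤ t → v₁ t ≤ v₂ t)
    (hb : ∀ t, 0 ≤ t → b₁ t ≤ b₂ t) (hc : ∀ t, 0 ≤ t → c₁ t ≤ c₂ t) :
    HasC2Bounds f v₂ b₂ c₂ := by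
  obtain ⟨f', f'', hf', hf'', hB⟩ := hf
  refine ⟨f', f'', hf', hf'', fun x => ?_⟩
  obtain ⟨h₀, h₁, h₂⟩ := hB x
  have hx := norm_nonneg x
  exact ⟨h₀.trans (hv _ hx), h₁.trans (hb _ hx), h₂.trans (hc _ hx)⟩

theorem add (hf : HasC2Bounds f v₁ b₁ c₁) (hg : HasC2Bounds g v₂ b₂ c₂) :
    HasC2Bounds (fun x => f x + g x) (fun t => v₁ t + v₂ t) (fun t => b₁ t + b₂ t)
      (fun t => c₁ t + c₂ t) := by
  obtain ⟨f', f'', hf', hf'', hfB⟩ := hf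
  obtain ⟨g', g'', hg', hg'', hgB⟩ := hg
  refine ⟨fun x => f' x + g' x, fun x => f'' x + g'' x, fun x => (hf' x).add (hg' x),
    fun x => (hf'' x).add (hg'' x), fun x => ?_⟩
  obtain ⟨hf₀, hf₁, hf₂⟩ := hfB x
  obtain ⟨hg₀, hg₁, hg₂⟩ := hgB x
  exact ⟨(abs_add_le _ _).trans (add_le_add hf₀ hg₀), (norm_add_le _ _).trans (add_le_add hf₁ hg₁),
    (norm_add_le (f'' x) (g'' x)).trans (add_le_add hf₂ hg₂)⟩

theorem const_mul (hf : HasC2Bounds f v b c) (a : ℝ) :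
    HasC2Bounds (fun x => a * f x) (fun t => |a| * v t) (fun t => |a| * b t)
      (fun t => |a| * c t) := by
  obtain ⟨f', f'', hf', hf'', hB⟩ := hf
  refine ⟨fun x => a • f' x, fun x => a • f'' x, fun x => (hf' x).const_mul a,
    fun x => (hf'' x).const_smul a, fun x => ?_⟩
  obtain ⟨h₀, h₁, h₂⟩ := hB x
  refine ⟨?_, ?_, ?_⟩
  · rw [abs_mul]; exact mul_le_mul_of_nonneg_left h₀ (abs_nonneg a)
  · rw [norm_smul, Real.norm_eq_abs]; exact mul_le_mul_of_nonneg_left h₁ (abs_nonneg a)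
  · exact (ContinuousLinearMap.opNorm_smul_le a _).trans
      (mul_le_mul_of_nonneg_left h₂ (abs_nonneg a))

theorem sub_const (hf : HasC2Bounds f v b c) (a : ℝ) :
    HasC2Bounds (fun x => f x - a) (fun t => v t + |a|) b c := by
  obtain ⟨f', f'', hf', hf'', hB⟩ := hf
  refine ⟨f', f'', fun x => (hf' x).sub_const a, hf'', fun x => ?_⟩
  obtain ⟨h₀, h₁, h₂⟩ := hB x
  exact ⟨(abs_sub _ _).trans (add_le_add_left h₀ _), h₁, h₂⟩

theorem sum {ι : Type*} [Fintype ι] {f : ι → H → ℝ} {v b c : ι → ℝ → ℝ}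
    (hf : ∀ i, HasC2Bounds (f i) (v i) (b i) (c i)) :
    HasC2Bounds (fun x => ∑ i, f i x) (fun t => ∑ i, v i t) (fun t => ∑ i, b i t)
      (fun t => ∑ i, c i t) := by
  choose f' f'' hf' hf'' hB using hf
  refine ⟨fun x => ∑ i, f' i x, fun x => ∑ i, f'' i x,
    fun x => HasFDerivAt.fun_sum fun i _ => hf' i x,
    fun x => HasFDerivAt.fun_sum fun i _ => hf'' i x, fun x => ⟨?_, ?_, ?_⟩⟩
  · exact (abs_sum_le_sum_abs _ _).trans (sum_le_sum fun i _ => (hB i x).1)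
  · exact (norm_sum_le _ _).trans (sum_le_sum fun i _ => (hB i x).2.1)
  · exact (norm_sum_le univ fun i => f'' i x).trans (sum_le_sum fun i _ => (hB i x).2.2)

theorem mul (hf : HasC2Bounds f v₁ b₁ c₁) (hg : HasC2Bounds g v₂ b₂ c₂) :
    HasC2Bounds (fun x => f x * g x) (fun t => v₁ t * v₂ t) (fun t => v₁ t * b₂ t + v₂ t * b₁ t)
      (fun t => v₁ t * c₂ t + 2 * (b₁ t * b₂ t) + v₂ t * c₁ t) := by
  obtain ⟨f', f'', hf', hf'', hfB⟩ := hf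
  obtain ⟨g', g'', hg', hg'', hgB⟩ := hg
  refine ⟨fun x => f x • g' x + g x • f' x,
    fun x => (f x • g'' x + (f' x).smulRight (g' x)) + (g x • f'' x + (g' x).smulRight (f' x)),
    fun x => (hf' x).mul (hg' x), fun x => ((hf' x).smul (hg'' x)).add ((hg' x).smul (hf'' x)),
    fun x => ?_⟩
  obtain ⟨hf₀, hf₁, hf₂⟩ := hfB x
  obtain ⟨hg₀, hg₁, hg₂⟩ := hgB x
  have smul_le {a : ℝ} {T : H →L[ℝ] ℝ} {α β : ℝ} (ha : |a| ≤ α) (hT : ‖T‖ ≤ β) :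
      ‖a • T‖ ≤ α * β :=
    (norm_smul_le a T).trans (mul_le_mul ha hT (norm_nonneg _) ((abs_nonneg a).trans ha))
  have smul_le₂ {a : ℝ} {T : H →L[ℝ] H →L[ℝ] ℝ} {α β : ℝ} (ha : |a| ≤ α) (hT : ‖T‖ ≤ β) :
      ‖a • T‖ ≤ α * β :=
    (ContinuousLinearMap.opNorm_smul_le a T).trans
      (mul_le_mul ha hT (norm_nonneg _) ((abs_nonneg a).trans ha))
  have smulRight_le {φ ψ : H →L[ℝ] ℝ} {α β : ℝ} (hφ : ‖φ‖ ≤ α) (hψ : ‖ψ‖ ≤ β) :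
      ‖φ.smulRight ψ‖ ≤ α * β := by
    rw [ContinuousLinearMap.norm_smulRight_apply]
    exact mul_le_mul hφ hψ (norm_nonneg _) ((norm_nonneg _).trans hφ)
  refine ⟨?_, ?_, ?_⟩
  · rw [abs_mul]; exact mul_le_mul hf₀ hg₀ (abs_nonneg _) ((abs_nonneg _).trans hf₀)
  · exact (norm_add_le (f x • g' x) (g x • f' x)).trans
      (add_le_add (smul_le hf₀ hg₁) (smul_le hg₀ hf₁))
  · have h₁ := (norm_add_le (f x • g'' x) ((f' x).smulRight (g' x))).trans
      (add_le_add (smul_le₂ hf₀ hg₂) (smulRight_le hf₁ hg₁))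
    have h₂ := (norm_add_le (g x • f'' x) ((g' x).smulRight (f' x))).trans
      (add_le_add (smul_le₂ hg₀ hf₂) (smulRight_le hg₁ hf₁))
    refine (norm_add_le _ _).trans ((add_le_add h₁ h₂).trans_eq ?_)
    ring

end HasC2Bounds

theorem ContinuousLinearMap.hasC2Bounds (L : H →L[ℝ] ℝ) :
    HasC2Bounds L (fun t => ‖L‖ * t) (fun _ => ‖L‖) (fun _ => 0) :=
  ⟨fun _ => L, fun _ => 0, fun _ => L.hasFDerivAt, fun _ => hasFDerivAt_const L _,
    fun x => ⟨L.le_opNorm x, le_rfl, (norm_zero (E := H →L[ℝ] H →L[ℝ] ℝ)).le⟩⟩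

theorem ContinuousLinearMap.hasC2Bounds_of_norm_le_one {L : H →L[ℝ] ℝ} (hL : ‖L‖ ≤ 1) :
    HasC2Bounds L (fun t => t) (fun _ => 1) (fun _ => 0) :=
  L.hasC2Bounds.mono (fun _ ht => mul_le_of_le_one_left ht hL) (fun _ _ => hL)
    fun _ _ => le_rfl

structure IsSmoothActivation (M : ℝ) (σ : ℝ → ℝ) : Prop where
  contDiff : ContDiff ℝ 2 σ
  lipschitz : LipschitzWith 1 σ
  map_zero : σ 0 = 0
  abs_deriv_deriv_le : ∀ t, |deriv (deriv σ) t| ≤ M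

namespace IsSmoothActivation

variable {M : ℝ} {σ : ℝ → ℝ} {A L : H →L[ℝ] ℝ}

theorem nonneg (hσ : IsSmoothActivation M σ) : 0 ≤ M :=
  (abs_nonneg _).trans (hσ.abs_deriv_deriv_le 0)

theorem hasC2Bounds_comp (hσ : IsSmoothActivation M σ) (L : H →L[ℝ] ℝ) :
    HasC2Bounds (fun x => σ (L x)) (fun t => ‖L‖ * t) (fun _ => ‖L‖)
      (fun _ => M * ‖L‖ ^ 2) := by
  have hσ₂ : ContDiff ℝ (1 + 1) σ := hσ.contDiff
  obtain ⟨hσ_diff, -, hσ'⟩ := contDiff_succ_iff_deriv.mp hσ₂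
  have hσ'_diff : Differentiable ℝ (deriv σ) := hσ'.differentiable one_ne_zero
  refine ⟨fun x => deriv σ (L x) • L, fun x => (deriv (deriv σ) (L x) • L).smulRight L,
    fun x => (hσ_diff (L x)).hasDerivAt.comp_hasFDerivAt x L.hasFDerivAt, fun x => ?_,
    fun x => ⟨?_, ?_, ?_⟩⟩
  · simpa using ((hσ'_diff (L x)).hasDerivAt.comp_hasFDerivAt x L.hasFDerivAt).smul_const L
  · have := hσ.lipschitz.dist_le_mul (L x) 0
    simp only [Real.dist_eq, hσ.map_zero, sub_zero, NNReal.coe_one, one_mul] at this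
    exact this.trans ((L.le_opNorm x).trans_eq' (Real.norm_eq_abs _).symm)
  · rw [norm_smul]
    have : ‖deriv σ (L x)‖ ≤ 1 := by simpa using norm_deriv_le_of_lipschitz hσ.lipschitz
    exact mul_le_of_le_one_left (norm_nonneg _) this
  · rw [ContinuousLinearMap.norm_smulRight_apply, norm_smul, Real.norm_eq_abs, sq, ← mul_assoc]
    exact mul_le_mul_of_nonneg_right (mul_le_mul_of_nonneg_right (hσ.abs_deriv_deriv_le _)
      (norm_nonneg _)) (norm_nonneg _)

theorem hasC2Bounds_comp_of_norm_le_one (hσ : IsSmoothActivation M σ) (hL : ‖L‖ ≤ 1) :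
    HasC2Bounds (fun ξ => σ (L ξ)) (fun t => t) (fun _ => 1) (fun _ => M) :=
  (hσ.hasC2Bounds_comp L).mono (fun _ ht => mul_le_of_le_one_left ht hL) (fun _ _ => hL)
    fun _ _ => mul_le_of_le_one_right hσ.nonneg (pow_le_one₀ (norm_nonneg L) hL)

theorem hasC2Bounds_mul_comp (hσ : IsSmoothActivation M σ) (hA : ‖A‖ ≤ 1) (hL : ‖L‖ ≤ 1) :
    HasC2Bounds (fun ξ => A ξ * σ (L ξ)) (fun t => 1 * t ^ 2) (fun t => 2 * t ^ 1)
      (fun t => M * t + 2) := by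
  refine (ContinuousLinearMap.hasC2Bounds_of_norm_le_one hA |>.mul
    (hσ.hasC2Bounds_comp_of_norm_le_one hL)).mono ?_ ?_ ?_ <;>
  · intro t _
    apply le_of_eq
    ring

theorem hasC2Bounds_sq_mul_sq_comp (hσ : IsSmoothActivation M σ) (hA : ‖A‖ ≤ 1)
    (hL : ‖L‖ ≤ 1) :
    HasC2Bounds (fun ξ => A ξ ^ 2 * σ (L ξ) ^ 2) (fun t => 1 * t ^ 4) (fun t => 4 * t ^ 3)
      (fun t => 2 * M * t ^ 3 + 12 * t ^ 2) := by
  have hA' := ContinuousLinearMap.hasC2Bounds_of_norm_le_one hA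
  have hS := hσ.hasC2Bounds_comp_of_norm_le_one hL
  simp only [sq]
  refine ((hA'.mul hA').mul (hS.mul hS)).mono ?_ ?_ ?_ <;>
  · intro t _
    apply le_of_eq
    ring

end IsSmoothActivation

end C2Bounds

section Blocks

variable {ι : Type*} [Fintype ι]

theorem PiLp.sum_mul_norm_le {β : ι → Type*} [∀ i, SeminormedAddCommGroup (β i)]
    (a : ι → ℝ) (u : PiLp 2 β) : ∑ i, a i * ‖u i‖ ≤ √(∑ i, a i ^ 2) * ‖u‖ := by
  rw [PiLp.norm_eq_of_L2]
  exact Real.sum_mul_le_sqrt_mul_sqrt _ _ _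

theorem PiLp.sum_norm_pow_le {β : ι → Type*} [∀ i, SeminormedAddCommGroup (β i)]
    (u : PiLp 2 β) {k : ℕ} (hk : 2 ≤ k) : ∑ i, ‖u i‖ ^ k ≤ ‖u‖ ^ k := by
  obtain ⟨j, rfl⟩ := Nat.exists_eq_add_of_le' hk
  calc ∑ i, ‖u i‖ ^ (j + 2) ≤ ∑ i, ‖u i‖ ^ 2 * ‖u‖ ^ j := sum_le_sum fun i _ => by
        rw [pow_add, mul_comm]
        exact mul_le_mul_of_nonneg_left (pow_le_pow_left₀ (norm_nonneg _)
          (PiLp.norm_apply_le u i) j) (sq_nonneg _)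
    _ = ‖u‖ ^ (j + 2) := by rw [← sum_mul, ← PiLp.norm_sq_eq_of_L2, pow_add, mul_comm]

variable {F : Type*} [NormedAddCommGroup F] [NormedSpace ℝ F]

theorem HasC2Bounds.sum_blocks {h : F → ℝ} {α β : ℝ} {j k : ℕ} {c : ℝ → ℝ}
    (hh : HasC2Bounds h (fun t => α * t ^ j) (fun t => β * t ^ k) c) (hj : 2 ≤ j) (hk : 1 ≤ k)
    (hα : 0 ≤ α) (hβ : 0 ≤ β) (hc : MonotoneOn c (Set.Ici 0)) :
    HasC2Bounds (fun θ : PiLp 2 (fun _ : ι => F) => ∑ r, h (θ r)) (fun t => α * t ^ j)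
      (fun t => β * t ^ k) c := by
  obtain ⟨h', h'', hh', hh'', hB⟩ := hh
  let E := PiLp 2 (fun _ : ι => F)
  let P : ι → E →L[ℝ] F := PiLp.proj 2 (fun _ : ι => F)
  refine ⟨fun θ => ∑ r, (h' (θ r)).comp (P r),
    fun θ => ∑ r, ((ContinuousLinearMap.compL ℝ E F ℝ).flip (P r)).comp ((h'' (θ r)).comp (P r)),
    fun θ => HasFDerivAt.fun_sum fun r _ => (hh' (θ r)).comp θ (P r).hasFDerivAt,
    fun θ => HasFDerivAt.fun_sum fun r _ => ((ContinuousLinearMap.compL ℝ E F ℝ).flip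
      (P r)).hasFDerivAt.comp θ ((hh'' (θ r)).comp θ (P r).hasFDerivAt),
    fun θ => ⟨?_, ?_, ?_⟩⟩
  · calc |∑ r, h (θ r)| ≤ ∑ r, α * ‖θ r‖ ^ j :=
          (abs_sum_le_sum_abs _ _).trans (sum_le_sum fun r _ => (hB (θ r)).1)
      _ ≤ α * ‖θ‖ ^ j := by
          rw [← mul_sum]; exact mul_le_mul_of_nonneg_left (PiLp.sum_norm_pow_le θ hj) hα
  · refine ContinuousLinearMap.opNorm_le_bound _ (by positivity) fun u => ?_
    have hpow : √(∑ r, (‖θ r‖ ^ k) ^ 2) ≤ ‖θ‖ ^ k := by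
      refine Real.sqrt_le_iff.mpr ⟨by positivity, ?_⟩
      simp only [← pow_mul, mul_comm k 2]
      exact PiLp.sum_norm_pow_le θ (by omega)
    calc _ = ‖∑ r, h' (θ r) (u r)‖ := by simp [P]
      _ ≤ ∑ r, β * ‖θ r‖ ^ k * ‖u r‖ :=
          (norm_sum_le _ _).trans (sum_le_sum fun r _ => ((h' (θ r)).le_opNorm _).trans
            (mul_le_mul_of_nonneg_right (hB (θ r)).2.1 (norm_nonneg _)))
      _ = β * ∑ r, ‖θ r‖ ^ k * ‖u r‖ := by rw [mul_sum]; simp only [mul_assoc]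
      _ ≤ β * (‖θ‖ ^ k * ‖u‖) := mul_le_mul_of_nonneg_left ((PiLp.sum_mul_norm_le _ u).trans
          (mul_le_mul_of_nonneg_right hpow (norm_nonneg _))) hβ
      _ = _ := by ring
  · have hcθ : ∀ r, c ‖θ r‖ ≤ c ‖θ‖ := fun r =>
      hc (norm_nonneg _) (norm_nonneg _) (PiLp.norm_apply_le θ r)
    have hc₀ : 0 ≤ c ‖θ‖ := (norm_nonneg (h'' 0)).trans ((hB 0).2.2.trans
      (hc (norm_nonneg _) (norm_nonneg _) (by simp)))
    refine ContinuousLinearMap.opNorm_le_bound _ hc₀ fun u => ?_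
    refine ContinuousLinearMap.opNorm_le_bound _ (by positivity) fun v => ?_
    calc _ = ‖∑ r, h'' (θ r) (u r) (v r)‖ := by simp [P]
      _ ≤ ∑ r, c ‖θ‖ * ‖u r‖ * ‖v r‖ :=
          (norm_sum_le _ _).trans (sum_le_sum fun r _ => ((h'' (θ r)).le_opNorm₂ _ _).trans
            (by gcongr; exact (hB (θ r)).2.2.trans (hcθ r)))
      _ = c ‖θ‖ * ∑ r, ‖u r‖ * ‖v r‖ := by rw [mul_sum]; simp only [mul_assoc]
      _ ≤ c ‖θ‖ * (‖u‖ * ‖v‖) := by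
          refine mul_le_mul_of_nonneg_left ((PiLp.sum_mul_norm_le _ v).trans_eq ?_) hc₀
          rw [PiLp.norm_eq_of_L2 u]
      _ = _ := by ring

end Blocks

theorem HasC2Bounds.norm_fderiv_gradient_apply_le {E : Type*} [NormedAddCommGroup E]
    [InnerProductSpace ℝ E] [CompleteSpace E] {f : E → ℝ} {v b c : ℝ → ℝ}
    (hf : HasC2Bounds f v b c) (x : E) :
    ‖fderiv ℝ (gradient f) x (gradient f x)‖ ≤ c ‖x‖ * b ‖x‖ := by
  obtain ⟨f', f'', hf', hf'', hB⟩ := hf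
  have hgrad : gradient f = (InnerProductSpace.toDual ℝ E).symm ∘ f' :=
    funext fun y => (hasFDerivAt_iff_hasGradientAt.mp (hf' y)).gradient
  rw [hgrad, ((InnerProductSpace.toDual ℝ E).symm.hasFDerivAt.comp x (hf'' x)).fderiv]
  calc _ = ‖f'' x ((InnerProductSpace.toDual ℝ E).symm (f' x))‖ := by simp
    _ ≤ ‖f'' x‖ * ‖f' x‖ := by
        simpa using (f'' x).le_opNorm ((InnerProductSpace.toDual ℝ E).symm (f' x))
    _ ≤ c ‖x‖ * b ‖x‖ := mul_le_mul (hB x).2.2 (hB x).2.1 (norm_nonneg _)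
        ((norm_nonneg (f'' x)).trans (hB x).2.2)

section TwoLayer

variable {d : ℕ} {ι : Type*} [Fintype ι] {M : ℝ} {σ : ℝ → ℝ}

theorem norm_innerSLFlip_comp_sndL_le (x : EuclideanSpace ℝ (Fin d)) (hx : ‖x‖ ≤ 1) :
    ‖(innerSLFlip ℝ x).comp (WithLp.sndL 2 ℝ ℝ (EuclideanSpace ℝ (Fin d)))‖ ≤ 1 := by
  refine ContinuousLinearMap.opNorm_le_bound _ zero_le_one fun ξ => ?_
  calc ‖⟪ξ.snd, x⟫‖ ≤ ‖ξ.snd‖ * ‖x‖ := norm_inner_le_norm _ _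
    _ ≤ 1 * ‖ξ‖ := by
        rw [mul_comm]; exact mul_le_mul hx (WithLp.norm_snd_le (x := ξ)) (norm_nonneg _) zero_le_one

theorem norm_fstL_le : ‖WithLp.fstL 2 ℝ ℝ (EuclideanSpace ℝ (Fin d))‖ ≤ 1 :=
  ContinuousLinearMap.opNorm_le_bound _ zero_le_one fun ξ => by
    simpa using WithLp.norm_fst_le (x := ξ)

theorem hasC2Bounds_sq_residual (hσ : IsSmoothActivation M σ) {x : EuclideanSpace ℝ (Fin d)}
    {y : ℝ} (hx : ‖x‖ ≤ 1) (hy : |y| ≤ 1) :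
    HasC2Bounds
      (fun θ : PiLp 2 (fun _ : ι => WithLp 2 (ℝ × EuclideanSpace ℝ (Fin d))) =>
        (∑ r, (θ r).fst * σ ⟪(θ r).snd, x⟫ - y) ^ 2)
      (fun t => (t ^ 2 + 1) * (t ^ 2 + 1)) (fun t => 4 * (t ^ 2 + 1) * t)
      (fun t => 2 * (t ^ 2 + 1) * (M * t + 2) + 8 * t ^ 2) := by
  have hneuron := hσ.hasC2Bounds_mul_comp norm_fstL_le (norm_innerSLFlip_comp_sndL_le x hx)
  have hmono : MonotoneOn (fun t => M * t + 2) (Set.Ici 0) := fun a _ b _ hab => by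
    have := hσ.nonneg
    dsimp only; gcongr
  have hres : HasC2Bounds (fun θ : PiLp 2 (fun _ : ι => WithLp 2 (ℝ × EuclideanSpace ℝ (Fin d))) =>
      ∑ r, (θ r).fst * σ ⟪(θ r).snd, x⟫ - y) (fun t => 1 * t ^ 2 + 1) (fun t => 2 * t ^ 1)
      (fun t => M * t + 2) :=
    ((hneuron.sum_blocks le_rfl le_rfl zero_le_one zero_le_two hmono).sub_const y).mono
      (fun t _ => add_le_add_right hy _) (fun _ _ => le_rfl) (fun _ _ => le_rfl)
  simp only [sq]
  refine (hres.mul hres).mono ?_ ?_ ?_ <;>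
  · intro t _
    apply le_of_eq
    ring

theorem hasC2Bounds_penalty (hσ : IsSmoothActivation M σ) {x : EuclideanSpace ℝ (Fin d)}
    (hx : ‖x‖ ≤ 1) :
    HasC2Bounds
      (fun θ : PiLp 2 (fun _ : ι => WithLp 2 (ℝ × EuclideanSpace ℝ (Fin d))) =>
        ∑ r, (θ r).fst ^ 2 * σ ⟪(θ r).snd, x⟫ ^ 2)
      (fun t => 1 * t ^ 4) (fun t => 4 * t ^ 3) (fun t => 2 * M * t ^ 3 + 12 * t ^ 2) := by
  have hmono : MonotoneOn (fun t => 2 * M * t ^ 3 + 12 * t ^ 2) (Set.Ici 0) :=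
    fun a (ha : 0 ≤ a) b _ hab => by
      have := hσ.nonneg
      dsimp only; gcongr
  exact (hσ.hasC2Bounds_sq_mul_sq_comp norm_fstL_le
    (norm_innerSLFlip_comp_sndL_le x hx)).sum_blocks (by norm_num) (by norm_num) zero_le_one
    (by norm_num) hmono

end TwoLayer

theorem abs_div_natCast_mul_mul_le (a X : ℝ) (n : ℕ) (hX : 0 ≤ X) :
    |a / n| * (n * X) ≤ |a| * X := by
  rcases n.eq_zero_or_pos with rfl | hn
  · simpa using mul_nonneg (abs_nonneg a) hX
  · rw [abs_div, Nat.abs_cast, ← mul_assoc, div_mul_cancel₀ _ (by positivity)]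

section DropoutLoss

variable {d n : ℕ} {ι : Type*} [Fintype ι]

noncomputable def dropoutLoss (p : ℝ) (σ : ℝ → ℝ) (x : Fin n → EuclideanSpace ℝ (Fin d))
    (y : Fin n → ℝ)
    (θ : PiLp 2 (fun _ : ι => WithLp 2 (ℝ × EuclideanSpace ℝ (Fin d)))) : ℝ :=
  1 / 2 / n * ∑ i, (∑ r, (θ r).fst * σ ⟪(θ r).snd, x i⟫ - y i) ^ 2 +
    (1 - p) / (2 * p) / n * ∑ i, ∑ r, (θ r).fst ^ 2 * σ ⟪(θ r).snd, x i⟫ ^ 2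

theorem hasC2Bounds_dropoutLoss {M p : ℝ} {σ : ℝ → ℝ} (hσ : IsSmoothActivation M σ)
    {x : Fin n → EuclideanSpace ℝ (Fin d)} {y : Fin n → ℝ} (hx : ∀ i, ‖x i‖ ≤ 1)
    (hy : ∀ i, |y i| ≤ 1) :
    HasC2Bounds (dropoutLoss (ι := ι) p σ x y)
      (fun t => (1 + |(1 - p) / (2 * p)|) * (1 + t) ^ 4)
      (fun t => (2 + 4 * |(1 - p) / (2 * p)|) * (1 + t) ^ 3)
      (fun t => (M + 6) * (1 + 2 * |(1 - p) / (2 * p)|) * (1 + t) ^ 3) := by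
  have hM := hσ.nonneg
  refine ((HasC2Bounds.sum fun i => hasC2Bounds_sq_residual hσ (hx i) (hy i)).const_mul
    (1 / 2 / n) |>.add <| (HasC2Bounds.sum fun i => hasC2Bounds_penalty hσ (hx i)).const_mul
    ((1 - p) / (2 * p) / n)).mono ?_ ?_ ?_ <;>
  · intro t ht
    simp only [sum_const, card_univ, Fintype.card_fin, nsmul_eq_mul]
    refine (add_le_add (abs_div_natCast_mul_mul_le _ _ _ (by positivity))
      (abs_div_natCast_mul_mul_le _ _ _ (by positivity))).trans ?_
    rw [abs_of_pos (by norm_num : (0 : ℝ) < 1 / 2)]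
    exact sub_nonneg.mp (by ring_nf; positivity)

end DropoutLoss

theorem stmt_11_general (p M : ℝ) :
    ∃ C : ℝ, 0 < C ∧
      ∀ (d m n : ℕ) (σ : ℝ → ℝ), ContDiff ℝ 2 σ → LipschitzWith 1 σ → σ 0 = 0 →
        (∀ t : ℝ, |deriv (deriv σ) t| ≤ M) →
      ∀ (x : Fin n → EuclideanSpace ℝ (Fin d)) (y : Fin n → ℝ),
        (∀ i, ‖x i‖ ≤ 1) → (∀ i, |y i| ≤ 1) →
      ∀ θ : PiLp 2 (fun _ : Fin m => WithLp 2 (ℝ × EuclideanSpace ℝ (Fin d))),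
        let LS : PiLp 2 (fun _ : Fin m => WithLp 2 (ℝ × EuclideanSpace ℝ (Fin d))) → ℝ :=
          fun θ' =>
            (1 / (2 * (n : ℝ))) * ∑ i,
              ((∑ r, (WithLp.equiv 2 (ℝ × EuclideanSpace ℝ (Fin d)) (θ' r)).1 *
                  σ ⟪(WithLp.equiv 2 (ℝ × EuclideanSpace ℝ (Fin d)) (θ' r)).2, x i⟫) - y i) ^ 2
            + ((1 - p) / (2 * (n : ℝ) * p)) * ∑ i, ∑ r,
                ((WithLp.equiv 2 (ℝ × EuclideanSpace ℝ (Fin d)) (θ' r)).1) ^ 2 *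
                  σ ⟪(WithLp.equiv 2 (ℝ × EuclideanSpace ℝ (Fin d)) (θ' r)).2, x i⟫ ^ 2
        ‖(fderiv ℝ (gradient LS) θ) (gradient LS θ)‖ ≤ C * (1 + ‖θ‖ ^ 6) := by
  set κ := |(1 - p) / (2 * p)|
  refine ⟨32 * ((|M| + 6) * (1 + 2 * κ) * (2 + 4 * κ)), by positivity, ?_⟩
  intro d m n σ hσ₂ hlip hσ0 hσM x y hx hy θ LS
  have hσ : IsSmoothActivation M σ := ⟨hσ₂, hlip, hσ0, hσM⟩
  have hLS : LS = dropoutLoss p σ x y := funext fun θ' => by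
    simp only [LS, dropoutLoss, WithLp.equiv_apply, WithLp.ofLp_fst, WithLp.ofLp_snd]
    ring
  rw [hLS]
  have hθ := norm_nonneg θ
  calc _ ≤ (M + 6) * (1 + 2 * κ) * (1 + ‖θ‖) ^ 3 * ((2 + 4 * κ) * (1 + ‖θ‖) ^ 3) :=
        (hasC2Bounds_dropoutLoss hσ hx hy).norm_fderiv_gradient_apply_le θ
    _ = (M + 6) * (1 + 2 * κ) * (2 + 4 * κ) * (1 + ‖θ‖) ^ 6 := by ring
    _ ≤ (|M| + 6) * (1 + 2 * κ) * (2 + 4 * κ) * (1 + ‖θ‖) ^ 6 := by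
        have := le_abs_self M
        gcongr
    _ ≤ (|M| + 6) * (1 + 2 * κ) * (2 + 4 * κ) * (2 ^ (6 - 1) * (1 ^ 6 + ‖θ‖ ^ 6)) := by
        gcongr; exact add_pow_le zero_le_one hθ 6
    _ = _ := by ring

/-- Hessian–gradient product bound for the modified dropout loss: for a smooth
1-Lipschitz activation with `σ(0) = 0` and bounded second derivative (by `M`),
and data bounded by 1, there is `C > 0` such that
`‖∇²_θ L_S(θ) · ∇_θ L_S(θ)‖₂ ≤ C (1 + ‖θ‖₂⁶)` for all `θ`. -/
theorem stmt_11 (p M : ℝ) (hp : 0 < p) (hp1 : p < 1) (hM : 0 ≤ M) :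
    ∃ C : ℝ, 0 < C ∧
      ∀ (d m n : ℕ) (σ : ℝ → ℝ), ContDiff ℝ 2 σ → LipschitzWith 1 σ → σ 0 = 0 →
        (∀ t : ℝ, |deriv (deriv σ) t| ≤ M) →
      ∀ (x : Fin n → EuclideanSpace ℝ (Fin d)) (y : Fin n → ℝ),
        (∀ i, ‖x i‖ ≤ 1) → (∀ i, |y i| ≤ 1) →
      ∀ θ : PiLp 2 (fun _ : Fin m => WithLp 2 (ℝ × EuclideanSpace ℝ (Fin d))),
        let LS : PiLp 2 (fun _ : Fin m => WithLp 2 (ℝ × EuclideanSpace ℝ (Fin d))) → ℝ :=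
          fun θ' =>
            (1 / (2 * (n : ℝ))) * ∑ i,
              ((∑ r, (WithLp.equiv 2 (ℝ × EuclideanSpace ℝ (Fin d)) (θ' r)).1 *
                  σ ⟪(WithLp.equiv 2 (ℝ × EuclideanSpace ℝ (Fin d)) (θ' r)).2, x i⟫) - y i) ^ 2
            + ((1 - p) / (2 * (n : ℝ) * p)) * ∑ i, ∑ r,
                ((WithLp.equiv 2 (ℝ × EuclideanSpace ℝ (Fin d)) (θ' r)).1) ^ 2 *
                  σ ⟪(WithLp.equiv 2 (ℝ × EuclideanSpace ℝ (Fin d)) (θ' r)).2, x i⟫ ^ 2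
        ‖(fderiv ℝ (gradient LS) θ) (gradient LS θ)‖ ≤ C * (1 + ‖θ‖ ^ 6) :=
  stmt_11_general p M
end
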